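/- Let q ≥ 1, α > 0, and let φ : [0,∞) → ℝ^q be continuous and bounded. Define the Kreisselmeier extended regressor Φ(t) = ∫₀ᵗ e^{−α(t−s)}·φ(s)·φ(s)ᵀ ds ∈ ℝ^{q×q} and Δ(t) = det Φ(t). If φ is (t₀,t_c,μ)-IE for some t₀ ≥ 0, t_c > 0 and μ > 0, then Δ is interval exciting: there exist t₀' ≥ 0, t_c' > 0 and μ' > 0 such that ∫_{t₀'}^{t₀'+t_c'} Δ(s)² ds ≥ μ'. -/

import Mathlib

/-!
Excitation of `φ` on `[t₀, t₀ + t_c]` makes `Φ(t₀ + t_c)` positive definite: its quadratic form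
`∫₀ᵗ e^{-α(t-s)} (φ(s) ⬝ x)² ds` dominates `e^{-α t_c}` times that of the Gram matrix of `φ` on
`[t₀, t₀ + t_c]`, which is at least `μ ‖x‖²`. Hence `Δ(t₀ + t_c) > 0`, and since `Φ` is
continuous, `Δ²` stays positive on a short interval starting at `t₀ + t_c`.
-/

open MeasureTheory

/-- The matrix `∫_a^b φ(s) φ(s)ᵀ ds`, defined entrywise. -/
noncomputable def gramOn (q : ℕ) (φ : ℝ → Fin q → ℝ) (a b : ℝ) :
    Matrix (Fin q) (Fin q) ℝ :=
  Matrix.of fun i j => ∫ s in a..b, φ s i * φ s j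

/-- The Kreisselmeier extended regressor
`Φ(t) = ∫₀ᵗ e^{-α(t-s)} φ(s) φ(s)ᵀ ds`, defined entrywise. -/
noncomputable def kreisselmeierPhi (q : ℕ) (α : ℝ) (φ : ℝ → Fin q → ℝ) (t : ℝ) :
    Matrix (Fin q) (Fin q) ℝ :=
  Matrix.of fun i j => ∫ s in (0:ℝ)..t, Real.exp (-α * (t - s)) * (φ s i * φ s j)

open Matrix

section WeightedGram

variable {q : ℕ} {φ : ℝ → Fin q → ℝ}

theorem dotProduct_mulVec_weightedGram {w : ℝ → ℝ} (hφ : Continuous φ) (hw : Continuous w)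
    (a b : ℝ) (x : Fin q → ℝ) :
    x ⬝ᵥ (of fun i j => ∫ s in a..b, w s * (φ s i * φ s j)) *ᵥ x
      = ∫ s in a..b, w s * (φ s ⬝ᵥ x) ^ 2 := by
  calc x ⬝ᵥ (of fun i j => ∫ s in a..b, w s * (φ s i * φ s j)) *ᵥ x
      = ∑ i, ∑ j, ∫ s in a..b, x i * (w s * (φ s i * φ s j)) * x j := by
        simp only [dotProduct, mulVec, of_apply, Finset.mul_sum]
        refine Finset.sum_congr rfl fun i _ => Finset.sum_congr rfl fun j _ => ?_
        rw [intervalIntegral.integral_mul_const, intervalIntegral.integral_const_mul, mul_assoc]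
    _ = ∫ s in a..b, ∑ i, ∑ j, x i * (w s * (φ s i * φ s j)) * x j := by
        refine ((intervalIntegral.integral_finsetSum fun i _ => ?_).trans
          (Finset.sum_congr rfl fun i _ => intervalIntegral.integral_finsetSum
            fun j _ => Continuous.intervalIntegrable (by fun_prop) a b)).symm
        exact Continuous.intervalIntegrable (by fun_prop) a b
    _ = ∫ s in a..b, w s * (φ s ⬝ᵥ x) ^ 2 := by
        refine intervalIntegral.integral_congr fun s _ => ?_
        rw [dotProduct, sq, Finset.sum_mul_sum, Finset.mul_sum]
        refine Finset.sum_congr rfl fun i _ => ?_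
        rw [Finset.mul_sum]
        exact Finset.sum_congr rfl fun j _ => by ring

theorem dotProduct_mulVec_gramOn (hφ : Continuous φ) (a b : ℝ) (x : Fin q → ℝ) :
    x ⬝ᵥ gramOn q φ a b *ᵥ x = ∫ s in a..b, (φ s ⬝ᵥ x) ^ 2 := by
  simpa [gramOn] using dotProduct_mulVec_weightedGram hφ continuous_const a b x (w := 1)

end WeightedGram

section Kreisselmeier

variable {q : ℕ} {α : ℝ} {φ : ℝ → Fin q → ℝ}

theorem continuous_kreisselmeierPhi (hφ : Continuous φ) :
    Continuous (kreisselmeierPhi q α φ) :=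
  continuous_matrix fun _ _ =>
    intervalIntegral.continuous_parametric_intervalIntegral_of_continuous (by fun_prop)
      continuous_id

theorem isHermitian_kreisselmeierPhi (t : ℝ) : (kreisselmeierPhi q α φ t).IsHermitian := by
  ext i j
  simp only [kreisselmeierPhi, conjTranspose_apply, of_apply, star_trivial, mul_comm (φ _ i)]

theorem exp_mul_dotProduct_mulVec_gramOn_le (hα : 0 ≤ α) (hφ : Continuous φ) {t₀ t : ℝ}
    (ht₀ : 0 ≤ t₀) (ht : t₀ ≤ t) (x : Fin q → ℝ) :
    Real.exp (-α * (t - t₀)) * (x ⬝ᵥ gramOn q φ t₀ t *ᵥ x)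
      ≤ x ⬝ᵥ kreisselmeierPhi q α φ t *ᵥ x := by
  rw [dotProduct_mulVec_gramOn hφ, ← intervalIntegral.integral_const_mul]
  calc ∫ s in t₀..t, Real.exp (-α * (t - t₀)) * (φ s ⬝ᵥ x) ^ 2
      ≤ ∫ s in t₀..t, Real.exp (-α * (t - s)) * (φ s ⬝ᵥ x) ^ 2 := by
        refine intervalIntegral.integral_mono_on ht
          (Continuous.intervalIntegrable (by fun_prop) _ _)
          (Continuous.intervalIntegrable (by fun_prop) _ _) fun s hs => ?_
        exact mul_le_mul_of_nonneg_right (Real.exp_le_exp.mpr (by nlinarith [hs.1]))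
          (sq_nonneg _)
    _ ≤ ∫ s in (0:ℝ)..t, Real.exp (-α * (t - s)) * (φ s ⬝ᵥ x) ^ 2 :=
        intervalIntegral.integral_mono_interval ht₀ ht le_rfl
          (Filter.Eventually.of_forall fun s => by positivity)
          (Continuous.intervalIntegrable (by fun_prop) _ _)
    _ = x ⬝ᵥ kreisselmeierPhi q α φ t *ᵥ x :=
        (dotProduct_mulVec_weightedGram hφ (by fun_prop) 0 t x).symm

theorem posDef_kreisselmeierPhi (hα : 0 ≤ α) (hφ : Continuous φ) {t₀ t : ℝ}
    (ht₀ : 0 ≤ t₀) (ht : t₀ ≤ t) (hG : (gramOn q φ t₀ t).PosDef) :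
    (kreisselmeierPhi q α φ t).PosDef := by
  refine posDef_iff_dotProduct_mulVec.mpr ⟨isHermitian_kreisselmeierPhi t, fun x hx => ?_⟩
  rw [star_trivial]
  have hGx : 0 < x ⬝ᵥ gramOn q φ t₀ t *ᵥ x := by simpa using hG.dotProduct_mulVec_pos hx
  exact (mul_pos (Real.exp_pos _) hGx).trans_le
    (exp_mul_dotProduct_mulVec_gramOn_le hα hφ ht₀ ht x)

end Kreisselmeier

theorem exists_pos_intervalIntegral_of_continuous {f : ℝ → ℝ} (hf : Continuous f) {t : ℝ}
    (ht : 0 < f t) : ∃ δ > 0, 0 < ∫ s in t..t + δ, f s := by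
  obtain ⟨δ, hδ, hpos⟩ := Metric.eventually_nhds_iff.mp
    (continuousAt_const.eventually_lt hf.continuousAt ht)
  refine ⟨δ, hδ, intervalIntegral.intervalIntegral_pos_of_pos_on
    (hf.intervalIntegrable _ _) (fun s hs => hpos ?_) (by linarith)⟩
  rw [Real.dist_eq, abs_lt]
  constructor <;> linarith [hs.1, hs.2]

theorem kreisselmeier_ie_implies_det_ie_general (q : ℕ) (α : ℝ)
    (hα : 0 < α) (φ : ℝ → Fin q → ℝ) (hφc : Continuous φ)
    (t₀ tc μ : ℝ) (ht₀ : 0 ≤ t₀) (htc : 0 < tc) (hμ : 0 < μ)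
    (hIE : (gramOn q φ t₀ (t₀ + tc)
            - μ • (1 : Matrix (Fin q) (Fin q) ℝ)).PosSemidef) :
    ∃ t₀' ≥ (0:ℝ), ∃ tc' > (0:ℝ), ∃ μ' > (0:ℝ),
      μ' ≤ ∫ s in t₀'..t₀' + tc', ((kreisselmeierPhi q α φ s).det) ^ 2 := by
  have hG : (gramOn q φ t₀ (t₀ + tc)).PosDef := by
    simpa using PosDef.posSemidef_add hIE (PosDef.one.smul hμ)
  have hΦ := posDef_kreisselmeierPhi hα.le hφc ht₀ (by linarith) hG
  obtain ⟨δ, hδ, hint⟩ := exists_pos_intervalIntegral_of_continuous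
    ((continuous_kreisselmeierPhi (α := α) hφc).matrix_det.pow 2) (pow_pos hΦ.det_pos 2)
  exact ⟨t₀ + tc, by positivity, δ, hδ, _, hint, le_rfl⟩

/-- Result R2: If `φ` is `(t₀,t_c,μ)`-IE then `Δ = det Φ` is
interval exciting. -/
theorem kreisselmeier_ie_implies_det_ie (q : ℕ) (hq : 1 ≤ q) (α : ℝ)
    (hα : 0 < α) (φ : ℝ → Fin q → ℝ) (hφc : Continuous φ)
    (hφb : ∃ C, ∀ t, 0 ≤ t → ‖φ t‖ ≤ C)
    (t₀ tc μ : ℝ) (ht₀ : 0 ≤ t₀) (htc : 0 < tc) (hμ : 0 < μ)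
    (hIE : (gramOn q φ t₀ (t₀ + tc)
            - μ • (1 : Matrix (Fin q) (Fin q) ℝ)).PosSemidef) :
    ∃ t₀' ≥ (0:ℝ), ∃ tc' > (0:ℝ), ∃ μ' > (0:ℝ),
      μ' ≤ ∫ s in t₀'..t₀' + tc', ((kreisselmeierPhi q α φ s).det) ^ 2 :=
  kreisselmeier_ie_implies_det_ie_general q α hα φ hφc t₀ tc μ ht₀ htc hμ hIE
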